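/- Let E_0,…,E_n be disjoint sets of primes and let u, v ∈ (0,1/2)^{n+1} with 0 < ‖u − v‖₁ < 1. Then there is an absolute constant C > 0 such that |F(v)/F(u) − 1| ≤ C·‖u − v‖₁, where F(ρ) := ∏_{0≤j≤n} ∏_{p ∈ E_j} (1 + ρ_j/(p−1))·(1 − 1/p)^{ρ_j}. -/

import Mathlib

/-!
Write `log ((1 + r/(p-1)) (1 - 1/p)^r) = log (p-1+r) - log (p-1) - r (log p - log (p-1))`.
For `0 ≤ a ≤ b ≤ 1` both `log (p-1+b) - log (p-1+a)` and `(b-a) (log p - log (p-1))` lie between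
`(b-a)/p` and `(b-a)/(p-1)`, so each logarithmic factor is Lipschitz on `[0, 1]` with constant
`1/(p-1) - 1/p`. These constants telescope, so their sum over any set of integers `p ≥ 2` is at
most `1`. Hence `|log F(v) - log F(u)| ≤ ‖u - v‖₁ < 1`, and `|eˣ - 1| ≤ 2|x|` for `|x| ≤ 1`
gives the bound with `C = 2`.
-/

open Finset

noncomputable section

/-- `F(ρ) = ∏_j ∏_{p ∈ E_j} (1 + ρ_j/(p-1)) (1 - 1/p)^{ρ_j}`. -/
def Fprod {n : ℕ} (E : Fin (n + 1) → Set ℕ) (ρ : Fin (n + 1) → ℝ) : ℝ :=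
  ∏ j, ∏' p : E j,
    ((1 + ρ j / (((p : ℕ) : ℝ) - 1)) * (1 - 1 / ((p : ℕ) : ℝ)) ^ (ρ j))

namespace EulerFactor

open Real

def eulerFactor (p r : ℝ) : ℝ := (1 + r / (p - 1)) * (1 - 1 / p) ^ r

def eulerLog (p r : ℝ) : ℝ := log (p - 1 + r) - log (p - 1) - r * (log p - log (p - 1))

@[simp]
lemma eulerLog_zero (p : ℝ) : eulerLog p 0 = 0 := by simp [eulerLog]

lemma eulerFactor_pos {p r : ℝ} (hp : 1 < p) (hr : 0 ≤ r) : 0 < eulerFactor p r := by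
  have hp1 : 0 < p - 1 := by linarith
  have hq : 0 < 1 - 1 / p := by rw [sub_pos, div_lt_one (by linarith)]; exact hp
  unfold eulerFactor
  positivity

lemma log_eulerFactor {p r : ℝ} (hp : 1 < p) (hr : 0 ≤ r) :
    log (eulerFactor p r) = eulerLog p r := by
  have hp1 : 0 < p - 1 := by linarith
  have h₁ : 1 + r / (p - 1) = (p - 1 + r) / (p - 1) := by field_simp
  have h₂ : 1 - 1 / p = (p - 1) / p := by field_simp
  rw [eulerFactor, h₁, h₂, log_mul (by positivity) (by positivity),
    log_rpow (by positivity), log_div (by positivity) hp1.ne', log_div hp1.ne' (by positivity),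
    eulerLog]
  ring

lemma log_sub_log_mem_Icc {x y : ℝ} (hx : 0 < x) (hxy : x ≤ y) :
    log y - log x ∈ Set.Icc ((y - x) / y) ((y - x) / x) := by
  have hy : 0 < y := hx.trans_le hxy
  rw [← log_div hy.ne' hx.ne']
  constructor
  · have := one_sub_inv_le_log_of_pos (div_pos hy hx)
    rwa [inv_div, ← div_self hy.ne', ← sub_div] at this
  · have := log_le_sub_one_of_pos (div_pos hy hx)
    rwa [← div_self hx.ne', ← sub_div] at this

lemma abs_eulerLog_sub_le_of_le {p a b : ℝ} (hp : 1 < p) (ha : 0 ≤ a) (hab : a ≤ b)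
    (hb : b ≤ 1) : |eulerLog p b - eulerLog p a| ≤ (b - a) * (1 / (p - 1) - 1 / p) := by
  have hp1 : 0 < p - 1 := by linarith
  have hba : 0 ≤ b - a := by linarith
  obtain ⟨hA₁, hA₂⟩ : log (p - 1 + b) - log (p - 1 + a) ∈
      Set.Icc ((b - a) / p) ((b - a) / (p - 1)) := by
    obtain ⟨h₁, h₂⟩ :=
      log_sub_log_mem_Icc (by linarith : 0 < p - 1 + a) (by linarith : p - 1 + a ≤ p - 1 + b)
    rw [add_sub_add_left_eq_sub] at h₁ h₂
    exact ⟨(div_le_div_of_nonneg_left hba (by linarith) (by linarith)).trans h₁,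
      h₂.trans (div_le_div_of_nonneg_left hba hp1 (by linarith))⟩
  obtain ⟨hB₁, hB₂⟩ : log p - log (p - 1) ∈ Set.Icc (1 / p) (1 / (p - 1)) := by
    simpa using log_sub_log_mem_Icc hp1 (by linarith : p - 1 ≤ p)
  have hB₁' := mul_le_mul_of_nonneg_left hB₁ hba
  have hB₂' := mul_le_mul_of_nonneg_left hB₂ hba
  rw [mul_one_div] at hB₁' hB₂'
  have hsplit : eulerLog p b - eulerLog p a =
      (log (p - 1 + b) - log (p - 1 + a)) - (b - a) * (log p - log (p - 1)) := by
    unfold eulerLog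
    ring
  rw [abs_le, hsplit, mul_sub, mul_one_div, mul_one_div]
  constructor <;> linarith

lemma abs_eulerLog_sub_le {p a b : ℝ} (hp : 1 < p) (ha : a ∈ Set.Icc 0 1)
    (hb : b ∈ Set.Icc 0 1) :
    |eulerLog p b - eulerLog p a| ≤ |b - a| * (1 / (p - 1) - 1 / p) := by
  rcases le_total a b with hab | hba
  · rw [abs_of_nonneg (sub_nonneg.2 hab)]
    exact abs_eulerLog_sub_le_of_le hp ha.1 hab hb.2
  · rw [abs_sub_comm, abs_sub_comm b, abs_of_nonneg (sub_nonneg.2 hba)]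
    exact abs_eulerLog_sub_le_of_le hp hb.1 hba ha.2

lemma one_div_add_one_sub_one_div_add_two_nonneg (n : ℕ) :
    0 ≤ 1 / ((n : ℝ) + 1) - 1 / ((n : ℝ) + 2) :=
  sub_nonneg.2 (one_div_le_one_div_of_le (by positivity) (by linarith))

lemma hasSum_one_div_add_one_sub_one_div_add_two :
    HasSum (fun n : ℕ => 1 / ((n : ℝ) + 1) - 1 / ((n : ℝ) + 2)) 1 := by
  rw [hasSum_iff_tendsto_nat_of_nonneg one_div_add_one_sub_one_div_add_two_nonneg]
  have hpartial : ∀ n : ℕ, ∑ i ∈ range n, (1 / ((i : ℝ) + 1) - 1 / ((i : ℝ) + 2)) =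
      1 - 1 / ((n : ℝ) + 1) := fun n => by
    simpa [add_assoc, one_add_one_eq_two] using sum_range_sub' (fun i : ℕ => 1 / ((i : ℝ) + 1)) n
  simp only [hpartial]
  simpa using (tendsto_one_div_add_atTop_nhds_zero_nat (𝕜 := ℝ)).const_sub 1

lemma one_div_sub_one_sub_one_div_eq {p : ℕ} (hp : 2 ≤ p) :
    1 / ((p : ℝ) - 1) - 1 / p = 1 / (((p - 2 : ℕ) : ℝ) + 1) - 1 / (((p - 2 : ℕ) : ℝ) + 2) := by
  rw [Nat.cast_sub hp]
  ring_nf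

section

variable {E : Set ℕ}

lemma injective_sub_two (hE : ∀ p ∈ E, 2 ≤ p) : Function.Injective fun p : E => (p : ℕ) - 2 :=
  fun p q hpq => Subtype.ext (by have := hE p p.2; have := hE q q.2; simp only at hpq; omega)

lemma summable_one_div_sub_one_sub_one_div (hE : ∀ p ∈ E, 2 ≤ p) :
    Summable fun p : E => 1 / ((p : ℝ) - 1) - 1 / p :=
  (hasSum_one_div_add_one_sub_one_div_add_two.summable.comp_injective (injective_sub_two hE)).congr
    fun p => (one_div_sub_one_sub_one_div_eq (hE p p.2)).symm

lemma tsum_one_div_sub_one_sub_one_div_le_one (hE : ∀ p ∈ E, 2 ≤ p) :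
    ∑' p : E, (1 / ((p : ℝ) - 1) - 1 / p) ≤ 1 := by
  rw [tsum_congr fun p : E => one_div_sub_one_sub_one_div_eq (hE p p.2)]
  exact (tsum_comp_le_tsum_of_inj hasSum_one_div_add_one_sub_one_div_add_two.summable
    one_div_add_one_sub_one_div_add_two_nonneg (injective_sub_two hE)).trans_eq
    hasSum_one_div_add_one_sub_one_div_add_two.tsum_eq

lemma summable_eulerLog (hE : ∀ p ∈ E, 2 ≤ p) {r : ℝ} (hr : r ∈ Set.Icc 0 1) :
    Summable fun p : E => eulerLog p r := by
  refine (summable_one_div_sub_one_sub_one_div hE).of_norm_bounded fun p => ?_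
  have hp : (1 : ℝ) < p := by exact_mod_cast hE p p.2
  have h := abs_eulerLog_sub_le hp (Set.left_mem_Icc.2 zero_le_one) hr
  have hw : 0 ≤ 1 / ((p : ℝ) - 1) - 1 / p :=
    sub_nonneg.2 (one_div_le_one_div_of_le (by linarith) (by linarith))
  rw [eulerLog_zero, sub_zero, sub_zero, abs_of_nonneg hr.1] at h
  exact h.trans (mul_le_of_le_one_left hw hr.2)

lemma tprod_eulerFactor (hE : ∀ p ∈ E, 2 ≤ p) {r : ℝ} (hr : r ∈ Set.Icc 0 1) :
    ∏' p : E, eulerFactor p r = exp (∑' p : E, eulerLog p r) := by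
  have hp : ∀ p : E, (1 : ℝ) < p := fun p => by exact_mod_cast hE p p.2
  have hlog : ∀ p : E, log (eulerFactor p r) = eulerLog p r := fun p => log_eulerFactor (hp p) hr.1
  rw [← rexp_tsum_eq_tprod (fun p => eulerFactor_pos (hp p) hr.1)
    ((summable_eulerLog hE hr).congr fun p => (hlog p).symm)]
  simp only [hlog]

lemma abs_tsum_eulerLog_sub_le (hE : ∀ p ∈ E, 2 ≤ p) {a b : ℝ} (ha : a ∈ Set.Icc 0 1)
    (hb : b ∈ Set.Icc 0 1) :
    |∑' p : E, eulerLog p b - ∑' p : E, eulerLog p a| ≤ |b - a| := by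
  have hw := summable_one_div_sub_one_sub_one_div hE
  rw [← (summable_eulerLog hE hb).tsum_sub (summable_eulerLog hE ha), ← Real.norm_eq_abs]
  refine (tsum_of_norm_bounded (hw.mul_left |b - a|).hasSum fun p => ?_).trans ?_
  · exact abs_eulerLog_sub_le (by exact_mod_cast hE p p.2) ha hb
  · rw [tsum_mul_left]
    exact mul_le_of_le_one_right (abs_nonneg _) (tsum_one_div_sub_one_sub_one_div_le_one hE)

end

lemma Fprod_eq_exp {n : ℕ} {E : Fin (n + 1) → Set ℕ} (hE : ∀ j, ∀ p ∈ E j, 2 ≤ p)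
    {ρ : Fin (n + 1) → ℝ} (hρ : ∀ j, ρ j ∈ Set.Icc 0 1) :
    Fprod E ρ = exp (∑ j, ∑' p : E j, eulerLog p (ρ j)) := by
  rw [exp_sum]
  exact prod_congr rfl fun j _ => tprod_eulerFactor (hE j) (hρ j)

end EulerFactor

open EulerFactor in
theorem stmt11 :
    ∃ C > 0, ∀ (n : ℕ) (E : Fin (n + 1) → Set ℕ),
      (∀ j, E j ⊆ {p | p.Prime}) →
      (∀ i j, i ≠ j → Disjoint (E i) (E j)) →
      ∀ u v : Fin (n + 1) → ℝ,
        (∀ j, u j ∈ Set.Ioo (0 : ℝ) (1 / 2)) → (∀ j, v j ∈ Set.Ioo (0 : ℝ) (1 / 2)) →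
        0 < ∑ j, |u j - v j| → (∑ j, |u j - v j|) < 1 →
        |Fprod E v / Fprod E u - 1| ≤ C * ∑ j, |u j - v j| := by
  refine ⟨2, two_pos, fun n E hE _ u v hu hv _ hδ => ?_⟩
  have hE₂ : ∀ j, ∀ p ∈ E j, 2 ≤ p := fun j p hp => (hE j hp).two_le
  have hIcc : ∀ ρ : Fin (n + 1) → ℝ, (∀ j, ρ j ∈ Set.Ioo (0 : ℝ) (1 / 2)) →
      ∀ j, ρ j ∈ Set.Icc (0 : ℝ) 1 := fun ρ hρ j => ⟨(hρ j).1.le, by linarith [(hρ j).2]⟩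
  set X := ∑ j, (∑' p : E j, eulerLog p (v j) - ∑' p : E j, eulerLog p (u j))
  have hX : |X| ≤ ∑ j, |u j - v j| := (abs_sum_le_sum_abs _ _).trans <| sum_le_sum fun j _ =>
    (abs_tsum_eulerLog_sub_le (hE₂ j) (hIcc u hu j) (hIcc v hv j)).trans_eq (abs_sub_comm _ _)
  rw [Fprod_eq_exp hE₂ (hIcc v hv), Fprod_eq_exp hE₂ (hIcc u hu), ← Real.exp_sub,
    ← sum_sub_distrib]
  exact (Real.abs_exp_sub_one_le (hX.trans hδ.le)).trans (by gcongr)
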